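/- arXiv:1503.06326 — 2 statements merged into one kernel-verified Lean document; each statement's English description precedes it below -/
import Mathlib

section
/- Let η : ℝ³ × ℝ³ → ℝ be continuously differentiable and suppose that for all pairs (v₁, v₂) of orthogonal unit vectors, v₁ × ∂η/∂v₁ + v₂ × ∂η/∂v₂ = 0. Then η is constant on the set Ω = {(v₁, v₂) : ‖v₁‖ = ‖v₂‖ = 1, ⟪v₁, v₂⟫ = 0}. -/
/-!
For a unit axis `ω`, let `R_t` be the rotation by angle `t` about `ω`. By the chain rule and the
triple product identity, `d/dt η (R_t v₁, R_t v₂) = ⟪ω, u₁ × ∇₁η + u₂ × ∇₂η⟫` at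
`(u₁, u₂) = (R_t v₁, R_t v₂)`, which vanishes by hypothesis since rotations keep pairs
orthonormal. So `η` is invariant under rotating an orthonormal pair. Any orthonormal pair
`(v₁, v₂)` is moved to `(w₁, w₂)` by two rotations: first about a unit axis orthogonal to `v₁`
and `w₁` (one exists in dimension three), taking `v₁` to `w₁`; then about `w₁`.
-/

open RealInnerProductSpace Module Real Matrix

lemma Real.exists_cos_sin_eq {c s : ℝ} (h : c ^ 2 + s ^ 2 = 1) :
    ∃ θ : ℝ, cos θ = c ∧ sin θ = s := by
  set z : ℂ := ⟨c, s⟩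
  have hz : ‖z‖ = 1 := by
    have : ‖z‖ ^ 2 = 1 := by rw [Complex.sq_norm, Complex.normSq_apply, ← h]; ring
    exact (pow_eq_one_iff_of_nonneg (norm_nonneg z) two_ne_zero).1 this
  refine ⟨z.arg, ?_, ?_⟩
  · simpa [hz] using Complex.norm_mul_cos_arg z
  · simpa [hz] using Complex.norm_mul_sin_arg z

lemma exists_norm_eq_one_inner_eq_zero_of_two_lt_finrank {F : Type*} [NormedAddCommGroup F]
    [InnerProductSpace ℝ F] [FiniteDimensional ℝ F] (hF : 2 < finrank ℝ F) (v w : F) :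
    ∃ ω : F, ‖ω‖ = 1 ∧ ⟪ω, v⟫ = 0 ∧ ⟪ω, w⟫ = 0 := by
  classical
  set K := Submodule.span ℝ (({v, w} : Finset F) : Set F)
  have hK : finrank ℝ K ≤ 2 := (finrank_span_finset_le_card _).trans Finset.card_le_two
  have hKperp : Kᗮ ≠ ⊥ := by
    intro h
    have := K.finrank_add_finrank_orthogonal
    rw [h, finrank_bot] at this
    omega
  obtain ⟨u, huK, hu⟩ := Submodule.exists_mem_ne_zero_of_ne_bot hKperp
  have horth : ∀ x ∈ ({v, w} : Finset F), ⟪x, u⟫ = 0 := fun x hx =>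
    (K.mem_orthogonal u).1 huK x (Submodule.subset_span hx)
  refine ⟨‖u‖⁻¹ • u, norm_smul_inv_norm hu, ?_, ?_⟩ <;>
    rw [real_inner_smul_left, real_inner_comm, horth _ (by simp), mul_zero]

lemma fderiv_apply_prod_eq_inner_gradient {F G : Type*} [NormedAddCommGroup F]
    [InnerProductSpace ℝ F] [CompleteSpace F] [NormedAddCommGroup G] [InnerProductSpace ℝ G]
    [CompleteSpace G] {η : F × G → ℝ} {u₁ : F} {u₂ : G} (hη : DifferentiableAt ℝ η (u₁, u₂))
    (a : F) (b : G) :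
    fderiv ℝ η (u₁, u₂) (a, b) =
      ⟪gradient (fun x => η (x, u₂)) u₁, a⟫ + ⟪gradient (fun y => η (u₁, y)) u₂, b⟫ := by
  have h₁ : HasFDerivAt (fun x => η (x, u₂)) ((fderiv ℝ η (u₁, u₂)).comp (.inl ℝ F G)) u₁ :=
    hη.hasFDerivAt.comp u₁ ((hasFDerivAt_id u₁).prodMk (hasFDerivAt_const u₂ u₁))
  have h₂ : HasFDerivAt (fun y => η (u₁, y)) ((fderiv ℝ η (u₁, u₂)).comp (.inr ℝ F G)) u₂ :=
    hη.hasFDerivAt.comp u₂ ((hasFDerivAt_const u₁ u₂).prodMk (hasFDerivAt_id u₂))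
  rw [inner_gradient_left, inner_gradient_left, h₁.fderiv, h₂.fderiv,
    ContinuousLinearMap.comp_apply, ContinuousLinearMap.comp_apply, ← map_add]
  simp

noncomputable section

namespace EuclideanSpace

local notation "E" => EuclideanSpace ℝ (Fin 3)

def cross (a b : E) : E := WithLp.toLp 2 (a ⨯₃ b)

lemma inner_eq_dotProduct (a b : E) : ⟪a, b⟫ = a.ofLp ⬝ᵥ b.ofLp := by
  rw [inner_eq_star_dotProduct, star_trivial, dotProduct_comm]

@[simp] lemma cross_self (a : E) : cross a a = 0 := by
  simp [cross]

lemma inner_cross_comm (a b c : E) : ⟪a, cross b c⟫ = ⟪b, cross c a⟫ := by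
  simp only [inner_eq_dotProduct, cross]
  exact triple_product_permutation _ _ _

lemma cross_add (a b c : E) : cross a (b + c) = cross a b + cross a c := by
  simp [cross]

lemma cross_smul (a b : E) (r : ℝ) : cross a (r • b) = r • cross a b := by
  simp [cross]

lemma cross_anticomm (a b : E) : cross b a = -cross a b := by
  simp only [cross, ← _root_.cross_anticomm a.ofLp, WithLp.toLp_neg]

lemma inner_cross_left (a b c : E) : ⟪cross a b, c⟫ = -⟪b, cross a c⟫ := by
  rw [real_inner_comm, inner_cross_comm, inner_cross_comm, cross_anticomm, inner_neg_right]

lemma norm_cross_sq (a b : E) : ‖cross a b‖ ^ 2 = ‖a‖ ^ 2 * ‖b‖ ^ 2 - ⟪a, b⟫ ^ 2 := by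
  simp only [← real_inner_self_eq_norm_sq, inner_eq_dotProduct, cross]
  rw [cross_dot_cross, dotProduct_comm b.ofLp a.ofLp]
  ring

lemma cross_cross (a b c : E) : cross a (cross b c) = ⟪a, c⟫ • b - ⟪a, b⟫ • c := by
  simp only [cross, inner_eq_dotProduct, cross_cross_eq_smul_sub_smul', dotProduct_comm b.ofLp]
  rfl

variable {ω : E}

/-- Rodrigues' formula for the rotation by angle `t` about the unit axis `ω`. -/
def rotation (ω : E) (t : ℝ) (x : E) : E :=
  cos t • x + sin t • cross ω x + ((1 - cos t) * ⟪ω, x⟫) • ω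

@[simp] lemma rotation_zero (ω x : E) : rotation ω 0 x = x := by
  simp [rotation]

lemma rotation_of_inner_eq_zero {x : E} (h : ⟪ω, x⟫ = 0) (t : ℝ) :
    rotation ω t x = cos t • x + sin t • cross ω x := by
  simp [rotation, h]

lemma rotation_self (hω : ‖ω‖ = 1) (t : ℝ) : rotation ω t ω = ω := by
  simp [rotation, hω, ← add_smul]

lemma hasDerivAt_rotation (hω : ‖ω‖ = 1) (x : E) (t : ℝ) :
    HasDerivAt (rotation ω · x) (cross ω (rotation ω t x)) t := by
  have hωω : ⟪ω, ω⟫ = 1 := by simp [hω]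
  have hderiv : HasDerivAt (rotation ω · x)
      ((-sin t) • x + cos t • cross ω x + (sin t * ⟪ω, x⟫) • ω) t := by
    refine (((hasDerivAt_cos t).smul_const x).add ((hasDerivAt_sin t).smul_const _)).add ?_
    simpa using (((hasDerivAt_const t 1).sub (hasDerivAt_cos t)).mul_const ⟪ω, x⟫).smul_const ω
  convert hderiv using 1
  simp only [rotation, cross_add, cross_smul, cross_cross, cross_self, hωω]
  module

lemma inner_rotation (hω : ‖ω‖ = 1) (x y : E) (t : ℝ) :
    ⟪rotation ω t x, rotation ω t y⟫ = ⟪x, y⟫ := by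
  have hconst : ∀ s, HasDerivAt (fun s => ⟪rotation ω s x, rotation ω s y⟫) 0 s := fun s => by
    refine ((hasDerivAt_rotation hω x s).inner ℝ (hasDerivAt_rotation hω y s)).congr_deriv ?_
    rw [inner_cross_left, real_inner_comm, add_neg_cancel]
  simpa using is_const_of_deriv_eq_zero (fun s => (hconst s).differentiableAt)
    (fun s => (hconst s).deriv) t 0

lemma norm_rotation (hω : ‖ω‖ = 1) (x : E) (t : ℝ) : ‖rotation ω t x‖ = ‖x‖ := by
  rw [norm_eq_sqrt_real_inner, inner_rotation hω, ← norm_eq_sqrt_real_inner]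

lemma exists_rotation_eq (hω : ‖ω‖ = 1) {x y : E} (hx : ‖x‖ = 1) (hy : ‖y‖ = 1)
    (hωx : ⟪ω, x⟫ = 0) (hωy : ⟪ω, y⟫ = 0) : ∃ t, rotation ω t x = y := by
  have hcross : cross ω (cross x y) = 0 := by simp [cross_cross, hωx, hωy]
  have hcircle : ⟪x, y⟫ ^ 2 + ⟪cross ω x, y⟫ ^ 2 = 1 := by
    have h₁ := norm_cross_sq ω (cross x y)
    have h₂ := norm_cross_sq x y
    rw [hcross, hω, norm_zero] at h₁
    rw [hx, hy] at h₂
    rw [real_inner_comm y (cross ω x), inner_cross_comm]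
    linear_combination h₂ + h₁
  obtain ⟨t, hcos, hsin⟩ := Real.exists_cos_sin_eq hcircle
  refine ⟨t, (inner_eq_one_iff_of_norm_eq_one (𝕜 := ℝ) (by rw [norm_rotation hω, hx]) hy).1 ?_⟩
  rw [rotation_of_inner_eq_zero hωx, inner_add_left, real_inner_smul_left, real_inner_smul_left,
    hcos, hsin]
  linear_combination hcircle

def angularMomentum (η : E × E → ℝ) (v₁ v₂ : E) : E :=
  cross v₁ (gradient (fun x => η (x, v₂)) v₁) + cross v₂ (gradient (fun y => η (v₁, y)) v₂)

lemma fderiv_apply_cross_eq_inner_angularMomentum {η : E × E → ℝ} {u₁ u₂ : E}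
    (hη : DifferentiableAt ℝ η (u₁, u₂)) (ω : E) :
    fderiv ℝ η (u₁, u₂) (cross ω u₁, cross ω u₂) = ⟪ω, angularMomentum η u₁ u₂⟫ := by
  rw [fderiv_apply_prod_eq_inner_gradient hη, angularMomentum, inner_add_right,
    inner_cross_comm _ ω u₁, inner_cross_comm _ ω u₂]

lemma apply_rotation_eq {η : E × E → ℝ} (hη : Differentiable ℝ η)
    (hL : ∀ v₁ v₂ : E, ‖v₁‖ = 1 → ‖v₂‖ = 1 → ⟪v₁, v₂⟫ = 0 → angularMomentum η v₁ v₂ = 0)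
    (hω : ‖ω‖ = 1) {v₁ v₂ : E} (h₁ : ‖v₁‖ = 1) (h₂ : ‖v₂‖ = 1) (h₁₂ : ⟪v₁, v₂⟫ = 0) (t : ℝ) :
    η (rotation ω t v₁, rotation ω t v₂) = η (v₁, v₂) := by
  have hconst : ∀ s, HasDerivAt (fun s => η (rotation ω s v₁, rotation ω s v₂)) 0 s := fun s => by
    have hL₀ := hL (rotation ω s v₁) (rotation ω s v₂) (by rw [norm_rotation hω, h₁])
      (by rw [norm_rotation hω, h₂]) (by rw [inner_rotation hω, h₁₂])
    refine ((hη _).hasFDerivAt.comp_hasDerivAt s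
      ((hasDerivAt_rotation hω v₁ s).prodMk (hasDerivAt_rotation hω v₂ s))).congr_deriv ?_
    rw [fderiv_apply_cross_eq_inner_angularMomentum (hη _), hL₀, inner_zero_right]
  simpa using is_const_of_deriv_eq_zero (fun s => (hconst s).differentiableAt)
    (fun s => (hconst s).deriv) t 0

end EuclideanSpace

end

open EuclideanSpace in
/-- If `η : ℝ³ × ℝ³ → ℝ` is C¹ and satisfies
`v₁ × ∂η/∂v₁ + v₂ × ∂η/∂v₂ = 0` on all orthonormal pairs `(v₁, v₂)`,
then `η` is constant on the set of orthonormal pairs. -/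
theorem eta_constant_on_orthonormal_pairs
    (η : EuclideanSpace ℝ (Fin 3) × EuclideanSpace ℝ (Fin 3) → ℝ)
    (hη : ContDiff ℝ 1 η)
    (hpde : ∀ v₁ v₂ : EuclideanSpace ℝ (Fin 3),
      ‖v₁‖ = 1 → ‖v₂‖ = 1 → ⟪v₁, v₂⟫ = 0 →
      (WithLp.toLp 2 (crossProduct v₁ ((gradient (fun x => η (x, v₂)) v₁ : EuclideanSpace ℝ (Fin 3)))) : EuclideanSpace ℝ (Fin 3)) +
        WithLp.toLp 2 (crossProduct v₂ ((gradient (fun y => η (v₁, y)) v₂ : EuclideanSpace ℝ (Fin 3)))) = 0) :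
    ∀ v₁ v₂ w₁ w₂ : EuclideanSpace ℝ (Fin 3),
      ‖v₁‖ = 1 → ‖v₂‖ = 1 → ⟪v₁, v₂⟫ = 0 →
      ‖w₁‖ = 1 → ‖w₂‖ = 1 → ⟪w₁, w₂⟫ = 0 →
      η (v₁, v₂) = η (w₁, w₂) := by
  intro v₁ v₂ w₁ w₂ hv₁ hv₂ hv₁₂ hw₁ hw₂ hw₁₂
  have hdiff : Differentiable ℝ η := hη.differentiable one_ne_zero
  obtain ⟨ω, hω, hωv₁, hωw₁⟩ :=
    exists_norm_eq_one_inner_eq_zero_of_two_lt_finrank (by simp) v₁ w₁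
  obtain ⟨t, ht⟩ := exists_rotation_eq hω hv₁ hw₁ hωv₁ hωw₁
  set v₂' := rotation ω t v₂
  have hv₂' : ‖v₂'‖ = 1 := by rw [norm_rotation hω, hv₂]
  have hw₁v₂' : ⟪w₁, v₂'⟫ = 0 := by rw [← ht, inner_rotation hω, hv₁₂]
  obtain ⟨s, hs⟩ := exists_rotation_eq hw₁ hv₂' hw₂ hw₁v₂' hw₁₂
  calc η (v₁, v₂) = η (w₁, v₂') := by rw [← ht, apply_rotation_eq hdiff hpde hω hv₁ hv₂ hv₁₂]
    _ = η (rotation w₁ s w₁, rotation w₁ s v₂') :=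
      (apply_rotation_eq hdiff hpde hw₁ hw₁ hv₂' hw₁v₂' s).symm
    _ = η (w₁, w₂) := by rw [rotation_self hw₁, hs]
end

section
/- Let η : ℝ³ × ℝ³ → ℝ be C¹ and satisfy n₁ × ∂η/∂n₁ + n₂ × ∂η/∂n₂ = 0 for all unit vectors n₁, n₂ ∈ S². Then there exists a C¹ function h : (0,2) → ℝ such that η(n₁, n₂) = h(1 − ⟪n₁, n₂⟫) for all (n₁, n₂) ∈ S² × S² with (⟪n₁, n₂⟫)² ≠ 1. -/
/-!
Rotating both arguments about a unit axis `u`, by Rodrigues' formula, moves them with velocity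
`u × nᵢ`, so the derivative of `η` along this flow is
`⟪∇₁η, u × n₁⟫ + ⟪∇₂η, u × n₂⟫ = ⟪u, n₁ × ∇₁η + n₂ × ∇₂η⟫ = 0`.
Hence `η` is invariant under all rotations of pairs of unit vectors. Two such rotations carry any
pair `(n₁, n₂)` to `(e₀, t e₀ + √(1 - t²) e₁)` with `t = ⟪n₁, n₂⟫`, so `η (n₁, n₂)` depends on `t`
only, and smoothly on `t ∈ (-1, 1)`.
-/

open RealInnerProductSpace

section

variable {E : Type*} [NormedAddCommGroup E] [InnerProductSpace ℝ E]

lemma norm_sub_inner_smul_sq {u : E} (hu : ‖u‖ = 1) (v : E) :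
    ‖v - ⟪u, v⟫ • u‖ ^ 2 = ‖v‖ ^ 2 - ⟪u, v⟫ ^ 2 := by
  rw [norm_sub_sq_real, norm_smul, real_inner_smul_right, real_inner_comm, hu,
    Real.norm_eq_abs, mul_one, sq_abs]
  ring

lemma exists_norm_eq_one_inner_eq_zero [FiniteDimensional ℝ E] (hE : 2 < Module.finrank ℝ E)
    (a b : E) : ∃ u : E, ‖u‖ = 1 ∧ ⟪u, a⟫ = 0 ∧ ⟪u, b⟫ = 0 := by
  have hK : (Submodule.span ℝ ({a, b} : Set E))ᗮ ≠ ⊥ := by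
    rw [Ne, Submodule.orthogonal_eq_bot_iff]
    intro hK
    classical
    have h := finrank_span_finset_le_card (R := ℝ) ({a, b} : Finset E)
    rw [Finset.coe_pair, Set.finrank, hK, finrank_top] at h
    exact absurd (h.trans Finset.card_le_two) (not_le.2 hE)
  obtain ⟨x, hxK, hx0⟩ := Submodule.exists_mem_ne_zero_of_ne_bot hK
  refine ⟨‖x‖⁻¹ • x, norm_smul_inv_norm hx0, ?_, ?_⟩ <;>
    rw [real_inner_smul_left, Submodule.inner_left_of_mem_orthogonal
      (Submodule.subset_span (by simp)) hxK, mul_zero]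

end

lemma exists_cos_sin_eq {a b : ℝ} (h : a ^ 2 + b ^ 2 = 1) :
    ∃ θ, Real.cos θ = a ∧ Real.sin θ = b := by
  obtain ⟨θ, hθ⟩ := (Complex.norm_eq_one_iff ⟨a, b⟩).1 (by
    rw [Complex.norm_eq_sqrt_sq_add_sq, h, Real.sqrt_one])
  exact ⟨θ, by simpa using congrArg Complex.re hθ, by simpa using congrArg Complex.im hθ⟩

theorem fderiv_apply_prodMk_eq_add {𝕜 E F G : Type*} [NontriviallyNormedField 𝕜]
    [NormedAddCommGroup E] [NormedSpace 𝕜 E] [NormedAddCommGroup F] [NormedSpace 𝕜 F]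
    [NormedAddCommGroup G] [NormedSpace 𝕜 G] {f : E × F → G} {p : E × F}
    (hf : DifferentiableAt 𝕜 f p) (a : E) (b : F) :
    fderiv 𝕜 f p (a, b) =
      fderiv 𝕜 (fun x => f (x, p.2)) p.1 a + fderiv 𝕜 (fun y => f (p.1, y)) p.2 b := by
  have h₁ : HasFDerivAt (fun x => f (x, p.2))
      ((fderiv 𝕜 f p).comp (ContinuousLinearMap.inl 𝕜 E F)) p.1 :=
    hf.hasFDerivAt.comp p.1 (hasFDerivAt_prodMk_left p.1 p.2)
  have h₂ : HasFDerivAt (fun y => f (p.1, y))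
      ((fderiv 𝕜 f p).comp (ContinuousLinearMap.inr 𝕜 E F)) p.2 :=
    hf.hasFDerivAt.comp p.2 (hasFDerivAt_prodMk_right p.1 p.2)
  rw [h₁.fderiv, h₂.fderiv]
  simp [← map_add]

noncomputable section

namespace SphereRotation

open Matrix

abbrev E3 := EuclideanSpace ℝ (Fin 3)

def cross (u v : E3) : E3 := WithLp.toLp 2 (u ⨯₃ v)

local infixl:74 " ×ₑ " => cross

lemma inner_eq_dotProduct (x y : E3) : ⟪x, y⟫ = WithLp.ofLp x ⬝ᵥ WithLp.ofLp y := by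
  rw [EuclideanSpace.inner_eq_star_dotProduct, star_trivial, dotProduct_comm]

lemma cross_add_right (u v w : E3) : u ×ₑ (v + w) = u ×ₑ v + u ×ₑ w := by
  simp [cross]

lemma cross_smul_right (u v : E3) (c : ℝ) : u ×ₑ (c • v) = c • (u ×ₑ v) := by
  simp [cross]

lemma cross_sub_right (u v w : E3) : u ×ₑ (v - w) = u ×ₑ v - u ×ₑ w := by
  simp [cross]

lemma cross_zero_right (u : E3) : u ×ₑ 0 = 0 := by
  simp [cross]

lemma cross_self (u : E3) : u ×ₑ u = 0 := by
  simp [cross]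

lemma neg_cross (u v : E3) : -(u ×ₑ v) = v ×ₑ u := by
  simp only [cross, ← WithLp.toLp_neg, cross_anticomm]

lemma inner_cross_right (u v w : E3) : ⟪u, v ×ₑ w⟫ = ⟪u ×ₑ v, w⟫ := by
  rw [inner_eq_dotProduct, inner_eq_dotProduct, dotProduct_comm _ (WithLp.ofLp w)]
  exact (triple_product_permutation (WithLp.ofLp w) (WithLp.ofLp u) (WithLp.ofLp v)).symm

lemma cross_cross (u v w : E3) : u ×ₑ (v ×ₑ w) = ⟪u, w⟫ • v - ⟪u, v⟫ • w := by
  rw [inner_eq_dotProduct, inner_eq_dotProduct, dotProduct_comm (WithLp.ofLp u) (WithLp.ofLp v)]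
  simp only [cross, cross_cross_eq_smul_sub_smul', WithLp.toLp_sub, WithLp.toLp_smul,
    WithLp.toLp_ofLp]

lemma cross_cross_self {u : E3} (hu : ‖u‖ = 1) (x : E3) : u ×ₑ (u ×ₑ x) = ⟪u, x⟫ • u - x := by
  rw [cross_cross, real_inner_self_eq_norm_sq, hu, one_pow, one_smul]

lemma inner_cross_add_inner_cross (u v w : E3) : ⟪v, u ×ₑ w⟫ + ⟪u ×ₑ v, w⟫ = 0 := by
  rw [inner_cross_right, ← neg_cross u v, inner_neg_left, neg_add_cancel]

def rot (u : E3) (θ : ℝ) (v : E3) : E3 :=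
  Real.cos θ • v + Real.sin θ • (u ×ₑ v) + ((1 - Real.cos θ) * ⟪u, v⟫) • u

lemma rot_zero (u v : E3) : rot u 0 v = v := by simp [rot]

lemma rot_self {u : E3} (hu : ‖u‖ = 1) (θ : ℝ) : rot u θ u = u := by
  rw [rot, cross_self, real_inner_self_eq_norm_sq, hu]
  module

lemma hasDerivAt_rot {u : E3} (hu : ‖u‖ = 1) (v : E3) (θ : ℝ) :
    HasDerivAt (fun t => rot u t v) (u ×ₑ rot u θ v) θ := by
  have hcross : u ×ₑ rot u θ v =
      (-Real.sin θ) • v + Real.cos θ • (u ×ₑ v) + (Real.sin θ * ⟪u, v⟫) • u := by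
    rw [rot, cross_add_right, cross_add_right, cross_smul_right, cross_smul_right,
      cross_smul_right, cross_self, cross_cross_self hu]
    module
  rw [hcross]
  refine (((Real.hasDerivAt_cos θ).smul_const v).add
    ((Real.hasDerivAt_sin θ).smul_const (u ×ₑ v))).add ?_
  simpa using (((Real.hasDerivAt_cos θ).const_sub 1).mul_const ⟪u, v⟫).smul_const u

lemma inner_rot {u : E3} (hu : ‖u‖ = 1) (θ : ℝ) (v w : E3) :
    ⟪rot u θ v, rot u θ w⟫ = ⟪v, w⟫ := by
  have hderiv (t : ℝ) : HasDerivAt (fun t => ⟪rot u t v, rot u t w⟫) 0 t := by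
    simpa only [inner_cross_add_inner_cross] using
      (hasDerivAt_rot hu v t).inner ℝ (hasDerivAt_rot hu w t)
  have := is_const_of_deriv_eq_zero (fun t => (hderiv t).differentiableAt)
    (fun t => (hderiv t).deriv) θ 0
  simpa [rot_zero] using this

lemma norm_rot {u : E3} (hu : ‖u‖ = 1) (θ : ℝ) (v : E3) : ‖rot u θ v‖ = ‖v‖ := by
  have := inner_rot hu θ v v
  rw [real_inner_self_eq_norm_sq, real_inner_self_eq_norm_sq] at this
  exact (pow_left_inj₀ (norm_nonneg _) (norm_nonneg _) two_ne_zero).1 this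

/-- `p` and `u × p` form an orthogonal frame of `u`ᗮ whose vectors both have length `‖p‖`. -/
lemma norm_sq_smul_eq_of_inner_eq_zero {u p q : E3} (hu : ‖u‖ = 1) (hp : ⟪u, p⟫ = 0)
    (hq : ⟪u, q⟫ = 0) : ‖p‖ ^ 2 • q = ⟪p, q⟫ • p + ⟪u ×ₑ p, q⟫ • (u ×ₑ p) := by
  have hpar : p ×ₑ q = ⟪u ×ₑ p, q⟫ • u := by
    have h := cross_cross_self hu (p ×ₑ q)
    rw [cross_cross u p q, hp, hq, zero_smul, zero_smul, sub_zero, cross_zero_right,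
      inner_cross_right] at h
    exact (sub_eq_zero.1 h.symm).symm
  have h := cross_cross p p q
  rw [hpar, cross_smul_right, ← neg_cross u p, real_inner_self_eq_norm_sq] at h
  linear_combination (norm := module) h

lemma exists_rot_eq {u v w : E3} (hu : ‖u‖ = 1) (hvw : ⟪u, v⟫ = ⟪u, w⟫) (hnorm : ‖v‖ = ‖w‖) :
    ∃ θ, rot u θ v = w := by
  have huu : ⟪u, u⟫ = 1 := by rw [real_inner_self_eq_norm_sq, hu, one_pow]
  set p := v - ⟪u, v⟫ • u with hp_def
  set q := w - ⟪u, v⟫ • u with hq_def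
  have hp : ⟪u, p⟫ = 0 := by rw [inner_sub_right, real_inner_smul_right, huu, mul_one, sub_self]
  have hq : ⟪u, q⟫ = 0 := by
    rw [inner_sub_right, real_inner_smul_right, huu, mul_one, hvw, sub_self]
  have hpq : ‖q‖ ^ 2 = ‖p‖ ^ 2 := by
    rw [hq_def, hp_def, norm_sub_inner_smul_sq hu, hvw, norm_sub_inner_smul_sq hu, hnorm]
  have hrot (θ : ℝ) : rot u θ v = (Real.cos θ • p + Real.sin θ • (u ×ₑ p)) + ⟪u, v⟫ • u := by
    rw [rot, hp_def, cross_sub_right, cross_smul_right, cross_self]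
    module
  suffices ∃ θ, Real.cos θ • p + Real.sin θ • (u ×ₑ p) = q by
    obtain ⟨θ, hθ⟩ := this
    exact ⟨θ, by rw [hrot, hθ, sub_add_cancel]⟩
  rcases eq_or_ne p 0 with hp0 | hp0
  · have hq0 : q = 0 := by simpa [hp0] using hpq
    exact ⟨0, by simp [hp0, hq0]⟩
  have hr : 0 < ‖p‖ ^ 2 := by positivity
  have hframe := norm_sq_smul_eq_of_inner_eq_zero hu hp hq
  have hsq : ‖p‖ ^ 2 * ‖p‖ ^ 2 = ⟪p, q⟫ ^ 2 + ⟪u ×ₑ p, q⟫ ^ 2 := by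
    have h := congrArg (fun x => ⟪x, q⟫) hframe
    simp only [inner_add_left, real_inner_smul_left, real_inner_self_eq_norm_sq, hpq] at h
    linear_combination h
  obtain ⟨θ, hcos, hsin⟩ := exists_cos_sin_eq (a := ⟪p, q⟫ / ‖p‖ ^ 2)
    (b := ⟪u ×ₑ p, q⟫ / ‖p‖ ^ 2) (by field_simp; linear_combination -hsq)
  refine ⟨θ, ?_⟩
  rw [hcos, hsin, div_eq_inv_mul, div_eq_inv_mul, mul_smul, mul_smul, ← smul_add, ← hframe,
    inv_smul_smul₀ hr.ne']

def e₀ : E3 := EuclideanSpace.single 0 1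

def e₁ : E3 := EuclideanSpace.single 1 1

def unitOfInner (t : ℝ) : E3 := t • e₀ + √(1 - t ^ 2) • e₁

lemma norm_e₀ : ‖e₀‖ = 1 := by simp [e₀]

lemma inner_e₀_unitOfInner (t : ℝ) : ⟪e₀, unitOfInner t⟫ = t := by
  simp [unitOfInner, e₀, e₁, inner_add_right, EuclideanSpace.inner_single_left]

lemma norm_unitOfInner {t : ℝ} (ht : t ^ 2 ≤ 1) : ‖unitOfInner t‖ = 1 := by
  rw [unitOfInner, ← mul_self_inj (norm_nonneg _) zero_le_one,
    norm_add_sq_eq_norm_sq_add_norm_sq_real (by simp [e₀, e₁, real_inner_smul_left,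
      EuclideanSpace.inner_single_left]),
    norm_smul, norm_smul, e₀, e₁]
  simp [Real.mul_self_sqrt (sub_nonneg.2 ht)]
  ring

lemma contDiffOn_unitOfInner {n : WithTop ℕ∞} : ContDiffOn ℝ n unitOfInner (Set.Ioo (-1) 1) := by
  have hsqrt : ContDiffOn ℝ n (fun t : ℝ => √(1 - t ^ 2)) (Set.Ioo (-1) 1) := by
    refine (contDiff_const.sub (contDiff_id.pow 2)).contDiffOn.sqrt fun t ht => ?_
    have : t ^ 2 < 1 := by rw [sq_lt_one_iff_abs_lt_one, abs_lt]; exact ht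
    simp only [id]; linarith
  exact (contDiffOn_id.smul contDiffOn_const).add (hsqrt.smul contDiffOn_const)

def IsRotationInvariantOnSphere (f : E3 × E3 → ℝ) : Prop :=
  ∀ u : E3, ‖u‖ = 1 → ∀ n₁ n₂ : E3, ‖n₁‖ = 1 → ‖n₂‖ = 1 →
    ∀ θ, f (rot u θ n₁, rot u θ n₂) = f (n₁, n₂)

theorem isRotationInvariantOnSphere_of_cross_gradient {η : E3 × E3 → ℝ}
    (hη : Differentiable ℝ η)
    (hpde : ∀ n₁ n₂ : E3, ‖n₁‖ = 1 → ‖n₂‖ = 1 →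
      n₁ ×ₑ gradient (fun x => η (x, n₂)) n₁ + n₂ ×ₑ gradient (fun y => η (n₁, y)) n₂ = 0) :
    IsRotationInvariantOnSphere η := by
  intro u hu n₁ n₂ h₁ h₂ θ
  have hderiv (t : ℝ) : HasDerivAt (fun t => η (rot u t n₁, rot u t n₂)) 0 t := by
    set r₁ := rot u t n₁
    set r₂ := rot u t n₂
    have hflow := (hη (r₁, r₂)).hasFDerivAt.comp_hasDerivAt t
      ((hasDerivAt_rot hu n₁ t).prodMk (hasDerivAt_rot hu n₂ t))
    have hzero : fderiv ℝ η (r₁, r₂) (u ×ₑ r₁, u ×ₑ r₂) = 0 := by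
      have h := congrArg (⟪u, ·⟫) (hpde r₁ r₂ ((norm_rot hu t n₁).trans h₁)
        ((norm_rot hu t n₂).trans h₂))
      simp only [inner_add_right, inner_zero_right, inner_cross_right] at h
      rwa [fderiv_apply_prodMk_eq_add (hη _), ← inner_gradient_left, ← inner_gradient_left,
        real_inner_comm, real_inner_comm (u ×ₑ r₂)]
    rwa [hzero] at hflow
  have := is_const_of_deriv_eq_zero (fun t => (hderiv t).differentiableAt)
    (fun t => (hderiv t).deriv) θ 0
  simpa [rot_zero] using this

theorem IsRotationInvariantOnSphere.apply_eq_apply_unitOfInner {f : E3 × E3 → ℝ}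
    (hf : IsRotationInvariantOnSphere f) {n₁ n₂ : E3} (h₁ : ‖n₁‖ = 1) (h₂ : ‖n₂‖ = 1) :
    f (n₁, n₂) = f (e₀, unitOfInner ⟪n₁, n₂⟫) := by
  have ht : ⟪n₁, n₂⟫ ^ 2 ≤ 1 := by
    rw [sq_le_one_iff_abs_le_one]
    simpa [h₁, h₂] using abs_real_inner_le_norm n₁ n₂
  obtain ⟨u, hu, hun₁, hue₀⟩ := exists_norm_eq_one_inner_eq_zero (by simp) n₁ e₀
  obtain ⟨θ₁, hθ₁⟩ := exists_rot_eq hu (hun₁.trans hue₀.symm) (h₁.trans norm_e₀.symm)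
  set m := rot u θ₁ n₂
  have hm : ‖m‖ = 1 := (norm_rot hu θ₁ n₂).trans h₂
  have hinner : ⟪e₀, m⟫ = ⟪e₀, unitOfInner ⟪n₁, n₂⟫⟫ := by
    rw [inner_e₀_unitOfInner, ← hθ₁, inner_rot hu]
  obtain ⟨θ₂, hθ₂⟩ := exists_rot_eq norm_e₀ hinner (hm.trans (norm_unitOfInner ht).symm)
  calc f (n₁, n₂) = f (e₀, m) := by rw [← hθ₁, hf u hu n₁ n₂ h₁ h₂]
    _ = f (rot e₀ θ₂ e₀, rot e₀ θ₂ m) := (hf e₀ norm_e₀ e₀ m norm_e₀ hm θ₂).symm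
    _ = f (e₀, unitOfInner ⟪n₁, n₂⟫) := by rw [rot_self norm_e₀, hθ₂]

end SphereRotation

end

open SphereRotation in
/-- If `η : ℝ³ × ℝ³ → ℝ` is C¹ and satisfies
`n₁ × ∂η/∂n₁ + n₂ × ∂η/∂n₂ = 0` for all unit vectors `n₁, n₂`, then there is a C¹
function `h` on `(0,2)` with `η(n₁,n₂) = h(1 - ⟪n₁,n₂⟫)` whenever `⟪n₁,n₂⟫² ≠ 1`. -/
theorem eta_is_function_of_inner
    (η : EuclideanSpace ℝ (Fin 3) × EuclideanSpace ℝ (Fin 3) → ℝ)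
    (hη : ContDiff ℝ 1 η)
    (hpde : ∀ n₁ n₂ : EuclideanSpace ℝ (Fin 3),
      ‖n₁‖ = 1 → ‖n₂‖ = 1 →
      (WithLp.toLp 2 (crossProduct n₁ ((gradient (fun x => η (x, n₂)) n₁ : EuclideanSpace ℝ (Fin 3))))
          : EuclideanSpace ℝ (Fin 3)) +
        WithLp.toLp 2 (crossProduct n₂ ((gradient (fun y => η (n₁, y)) n₂ : EuclideanSpace ℝ (Fin 3)))) = 0) :
    ∃ h : ℝ → ℝ, ContDiffOn ℝ 1 h (Set.Ioo 0 2) ∧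
      ∀ n₁ n₂ : EuclideanSpace ℝ (Fin 3),
        ‖n₁‖ = 1 → ‖n₂‖ = 1 → (⟪n₁, n₂⟫ : ℝ) ^ 2 ≠ 1 →
        η (n₁, n₂) = h (1 - ⟪n₁, n₂⟫) := by
  have hinv : IsRotationInvariantOnSphere η :=
    isRotationInvariantOnSphere_of_cross_gradient (hη.differentiable one_ne_zero) hpde
  refine ⟨fun σ => η (e₀, unitOfInner (1 - σ)), ?_, fun n₁ n₂ h₁ h₂ _ => ?_⟩
  · have hmaps : Set.MapsTo (fun σ : ℝ => 1 - σ) (Set.Ioo 0 2) (Set.Ioo (-1) 1) :=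
      fun σ hσ => ⟨by linarith [hσ.2], by linarith [hσ.1]⟩
    exact hη.comp_contDiffOn (contDiffOn_const.prodMk
      (contDiffOn_unitOfInner.comp (contDiffOn_const.sub contDiffOn_id) hmaps))
  · simp only [hinv.apply_eq_apply_unitOfInner h₁ h₂, sub_sub_cancel]
end
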